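/- arXiv:2304.13816 — 4 statements merged into one kernel-verified Lean document; each statement's English description precedes it below -/
import Mathlib

section
/- For classical LTL over infinite words, GF(φ) ≡ GF(ψ) ∧ ⋀_{i∈I} FG(φᵢ) ∧ ⋀_{j∈J} GF(φⱼ), where φ = ψ ∧ ⋀_{i∈I} G(φᵢ) ∧ ⋀_{j∈J} F(φⱼ). -/
/-!
In filter language, `G F ψ` is `∃ᶠ m in atTop, ψ m` and `F G φ` is `∀ᶠ m in atTop, φ m`. The
predicate `m ↦ ⋀ᵢ G φᵢ` (holding from `m` on) is monotone in `m`, while `m ↦ ⋀ⱼ F φⱼ` is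
antitone. A monotone conjunct occurs frequently alongside `ψ` iff it eventually holds, an antitone
one iff it always holds; finiteness of `I` lets the eventualities `F G φᵢ` be combined.
-/

open Filter

namespace Filter

variable {α : Type*} [Preorder α] {p s : α → Prop}

theorem frequently_atTop_and_iff_of_monotone (hs : Monotone s) :
    (∃ᶠ x in atTop, p x ∧ s x) ↔ (∃ᶠ x in atTop, p x) ∧ ∃ x, s x := by
  refine ⟨fun h => ⟨h.mono fun _ => And.left, (h.mono fun _ => And.right).exists⟩, ?_⟩
  rintro ⟨hp, x, hx⟩
  exact hp.and_eventually <| (eventually_ge_atTop x).mono fun _ hy => hs hy hx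

theorem frequently_atTop_and_iff_of_antitone (hs : Antitone s) :
    (∃ᶠ x in atTop, p x ∧ s x) ↔ (∃ᶠ x in atTop, p x) ∧ ∀ x, s x := by
  refine ⟨fun h => ⟨h.mono fun _ => And.left, fun x => ?_⟩,
    fun ⟨hp, hall⟩ => hp.mono fun x hx => ⟨hx, hall x⟩⟩
  obtain ⟨y, ⟨-, hy⟩, hxy⟩ := (h.and_eventually (eventually_ge_atTop x)).exists
  exact hs hxy hy

theorem exists_forall_ge_forall_iff {ι : Type*} [Finite ι] [IsDirectedOrder α] [Nonempty α]
    {q : ι → α → Prop} :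
    (∃ a, ∀ i b, a ≤ b → q i b) ↔ ∀ i, ∃ a, ∀ b, a ≤ b → q i b := by
  simp only [← eventually_atTop, ← eventually_all]
  rw [eventually_atTop]
  exact exists_congr fun _ => forall_comm.trans (forall_congr' fun _ => forall_comm)

end Filter

theorem stmt_3_general {I J : Type*} [Fintype I]
    (P : ℕ → Prop) (Q : I → ℕ → Prop) (R : J → ℕ → Prop) :
    (∀ n, ∃ m, n ≤ m ∧ (P m ∧ (∀ i, ∀ k, m ≤ k → Q i k) ∧ (∀ j, ∃ k, m ≤ k ∧ R j k)))
      ↔ ((∀ n, ∃ m, n ≤ m ∧ P m) ∧ (∀ i, ∃ n, ∀ m, n ≤ m → Q i m) ∧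
          (∀ j, ∀ n, ∃ m, n ≤ m ∧ R j m)) := by
  have hQ : Monotone fun m => ∀ i, ∀ k, m ≤ k → Q i k :=
    fun _ _ hab h i k hk => h i k (hab.trans hk)
  have hR : Antitone fun m => ∀ j, ∃ k, m ≤ k ∧ R j k :=
    fun _ _ hab h j => (h j).imp fun _ hk => ⟨hab.trans hk.1, hk.2⟩
  have key := (frequently_atTop_and_iff_of_antitone hR).trans
    (and_congr_left' (frequently_atTop_and_iff_of_monotone (p := P) hQ))
  simp only [frequently_atTop, and_assoc] at key
  rw [key, exists_forall_ge_forall_iff, forall_comm (α := ℕ)]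

/-- GF(ψ ∧ ⋀ᵢ G φᵢ ∧ ⋀ⱼ F φⱼ) ≡ GF ψ ∧ ⋀ᵢ FG φᵢ ∧ ⋀ⱼ GF φⱼ -/
theorem stmt_3 {I J : Type*} [Fintype I] [Fintype J]
    (P : ℕ → Prop) (Q : I → ℕ → Prop) (R : J → ℕ → Prop) :
    (∀ n, ∃ m, n ≤ m ∧ (P m ∧ (∀ i, ∀ k, m ≤ k → Q i k) ∧ (∀ j, ∃ k, m ≤ k ∧ R j k)))
      ↔ ((∀ n, ∃ m, n ≤ m ∧ P m) ∧ (∀ i, ∃ n, ∀ m, n ≤ m → Q i m) ∧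
          (∀ j, ∀ n, ∃ m, n ≤ m ∧ R j m)) :=
  stmt_3_general P Q R
end

section
/- For LTL over infinite words (without Next), the equivalence (ψ ∨ ψ') U φ ≡ (ψ U ψ') U ((ψ' U ψ) U φ) holds, where α U β holds at position i iff there exists j ≥ i with β at j and α at all positions in [i, j). -/
/-!
Both sides say that `P ∨ P'` holds up to some point where `Q` holds. Going right to left, each
of `P U P'` and `P' U P` implies `P ∨ P'` at the current position. Going left to right, cut the
interval `[i, j)` before the witness `j` of `Q` at the least `m` from which `P` holds all the way
to `j`: from `m` on, `P' U P` holds trivially, and before `m` the first failure of `P` is a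
position where `P'` holds, which witnesses `P U P'`.
-/

/-- Classical until semantics over infinite words, for predicates on positions. -/
def LTLUntil (P Q : ℕ → Prop) (i : ℕ) : Prop :=
  ∃ j, i ≤ j ∧ Q j ∧ ∀ k, i ≤ k → k < j → P k

namespace LTLUntil

variable {P P' Q : ℕ → Prop} {i : ℕ}

theorem of_right (h : Q i) : LTLUntil P Q i :=
  ⟨i, le_rfl, h, fun _ hik hki => absurd hki (not_lt.2 hik)⟩

theorem left_or_right (h : LTLUntil P Q i) : P i ∨ Q i := by
  obtain ⟨j, hij, hQ, hP⟩ := h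
  rcases hij.eq_or_lt with rfl | hlt
  · exact .inr hQ
  · exact .inl (hP i le_rfl hlt)

theorem until_or_forall_left {j : ℕ} (h : ∀ l, i ≤ l → l < j → P l ∨ P' l) :
    LTLUntil P P' i ∨ ∀ l, i ≤ l → l < j → P l := by
  classical
  refine or_iff_not_imp_right.2 fun hfail => ?_
  push Not at hfail
  obtain ⟨hil, hlj, hnP⟩ := Nat.find_spec hfail
  exact ⟨Nat.find hfail, hil, (h _ hil hlj).resolve_left hnP, fun t hit htl =>
    by_contra fun hnPt => Nat.find_min hfail htl ⟨hit, htl.trans hlj, hnPt⟩⟩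

theorem until_until_of_or_until (h : LTLUntil (fun n => P n ∨ P' n) Q i) :
    LTLUntil (LTLUntil P P') (LTLUntil (LTLUntil P' P) Q) i := by
  classical
  obtain ⟨j, hij, hQ, hor⟩ := h
  have hj : i ≤ j ∧ ∀ l, j ≤ l → l < j → P l := ⟨hij, fun _ hjl hlj => absurd hlj (not_lt.2 hjl)⟩
  have hsuffix : ∃ m, i ≤ m ∧ ∀ l, m ≤ l → l < j → P l := ⟨j, hj⟩
  obtain ⟨him, hP⟩ := Nat.find_spec hsuffix
  refine ⟨Nat.find hsuffix, him,
    ⟨j, Nat.find_min' hsuffix hj, hQ, fun k hmk hkj => of_right (hP k hmk hkj)⟩,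
    fun k hik hkm => ?_⟩
  exact (until_or_forall_left fun l hkl hlj => hor l (hik.trans hkl) hlj).resolve_right
    fun hPk => Nat.find_min hsuffix hkm ⟨hik, hPk⟩

theorem or_until_of_until_until (h : LTLUntil (LTLUntil P P') (LTLUntil (LTLUntil P' P) Q) i) :
    LTLUntil (fun n => P n ∨ P' n) Q i := by
  obtain ⟨j, hij, ⟨m, hjm, hQ, hafter⟩, hbefore⟩ := h
  refine ⟨m, hij.trans hjm, hQ, fun k hik hkm => ?_⟩
  rcases lt_or_ge k j with hkj | hjk
  · exact (hbefore k hik hkj).left_or_right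
  · exact (hafter k hjk hkm).left_or_right.symm

end LTLUntil

/-- (ψ ∨ ψ') U φ ≡ (ψ U ψ') U ((ψ' U ψ) U φ) -/
theorem stmt_5 (P P' Q : ℕ → Prop) (i : ℕ) :
    LTLUntil (fun n => P n ∨ P' n) Q i ↔
      LTLUntil (LTLUntil P P') (LTLUntil (LTLUntil P' P) Q) i :=
  ⟨LTLUntil.until_until_of_or_until, LTLUntil.or_until_of_until_until⟩
end

section
/- Let M ∈ ℝ^{d×n}, A ∈ ℝ^{k×d}, b ∈ ℝ^k, and z ∈ ℝ^d. Suppose there exist v₁ ∈ ℝ^k with v₁ ≥ 0 and v₂ ≥ 0 such that v₁ᵀ·A·M ≥ v₂·𝟙ᵀ componentwise and v₂ > 0. Then there is no infinite sequence of points z = z₀, z₁, z₂, … with each A·zₙ ≤ b, where zₙ = z + M·λₙ for nonnegative vectors λ₀ ≤ λ₁ ≤ λ₂ ≤ … ∈ ℝ^n whose total sums 𝟙ᵀ·λₙ tend to infinity. -/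
/-!
Pairing the constraint `A zₙ ≤ b` with the nonnegative weights `v₁` and using
`v₁ᵀ A M ≥ v₂ 𝟙ᵀ` gives `v₂ · 𝟙ᵀ λₙ ≤ v₁ᵀ (b - A z)` for every `n`, so the total sums `𝟙ᵀ λₙ`
stay bounded and cannot tend to infinity.
-/

open Matrix Filter

section DualCertificate

variable {R ι κ ν : Type*} [Ring R] [PartialOrder R] [IsOrderedRing R]
  [Fintype ι] [Fintype κ] [Fintype ν]

theorem mul_sum_le_dotProduct_sub_of_dual_certificate (M : Matrix ι ν R) (A : Matrix κ ι R)
    (b : κ → R) (z : ι → R) {v₁ : κ → R} (hv₁ : 0 ≤ v₁) {v₂ : R}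
    (hdual : ∀ j, v₂ ≤ (v₁ ᵥ* A ᵥ* M) j) {lam : ν → R} (hlam : 0 ≤ lam)
    (hfeas : A *ᵥ (z + M *ᵥ lam) ≤ b) :
    v₂ * ∑ i, lam i ≤ v₁ ⬝ᵥ (b - A *ᵥ z) :=
  calc v₂ * ∑ i, lam i = (fun _ ↦ v₂) ⬝ᵥ lam := Finset.mul_sum ..
    _ ≤ (v₁ ᵥ* A ᵥ* M) ⬝ᵥ lam := dotProduct_le_dotProduct_of_nonneg_right hdual hlam
    _ = v₁ ⬝ᵥ (A *ᵥ (z + M *ᵥ lam) - A *ᵥ z) := by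
      rw [mulVec_add, add_sub_cancel_left, dotProduct_mulVec, dotProduct_mulVec, vecMul_vecMul]
    _ ≤ v₁ ⬝ᵥ (b - A *ᵥ z) := dotProduct_le_dotProduct_of_nonneg_left (sub_le_sub_right hfeas _) hv₁

end DualCertificate

theorem stmt_11 {d n k : ℕ}
    (M : Matrix (Fin d) (Fin n) ℝ) (A : Matrix (Fin k) (Fin d) ℝ)
    (b : Fin k → ℝ) (z : Fin d → ℝ)
    (v₁ : Fin k → ℝ) (hv₁ : ∀ i, 0 ≤ v₁ i) (v₂ : ℝ) (hv₂ : 0 < v₂)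
    (hdual : ∀ j, v₂ ≤ Matrix.vecMul (Matrix.vecMul v₁ A) M j) :
    ¬ ∃ lam : ℕ → (Fin n → ℝ),
        (∀ m i, 0 ≤ lam m i) ∧
        (∀ m i, lam m i ≤ lam (m + 1) i) ∧
        Tendsto (fun m => ∑ i, lam m i) atTop atTop ∧
        (∀ m j, (A.mulVec (z + M.mulVec (lam m))) j ≤ b j) := by
  rintro ⟨lam, hlam, -, htend, hfeas⟩
  refine not_bddAbove_of_tendsto_atTop htend ⟨v₁ ⬝ᵥ (b - A *ᵥ z) / v₂, ?_⟩
  rintro _ ⟨m, rfl⟩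
  rw [le_div_iff₀' hv₂]
  exact mul_sum_le_dotProduct_sub_of_dual_certificate M A b z hv₁ hdual (hlam m) (hfeas m)
end

section
/- Let Z ⊆ ℝ^d be convex and let x →^{ρ (α,m) ρ'} y be a finite trajectory staying in Z, meaning: starting at x, applying the displacement sequence of ρ, then α·m, then ρ', all partial points (including along each segment) remain in Z. Then the trajectory x →^{ρ (α/2, m) (1/2)ρ' (α/2, m)} also stays entirely in Z, where (1/2)ρ' denotes ρ' with all durations halved. -/
/-!
Let `y ∈ Z` be the point reached after `ρ` and `E` the end of the original trajectory.
Running half of `m` from `y` reaches the midpoint of `y + α • m` and `y`; from there the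
halved `ρ'` traces the midpoint of the original `ρ'`-trajectory and the fixed point `y`, ending
at `(E + y) / 2`; the last half of `m` then traces the midpoint of `E` and the segment from `y`
to `y + α • m`. Every point is a midpoint of two points of `Z`, so convexity concludes.
-/

/-- A schedule is a finite list of (duration, mode) pairs. `StaysIn Z x π` says
that the piecewise-linear trajectory induced by `π` from `x` remains in `Z`. -/
def StaysIn {d : ℕ} (Z : Set (Fin d → ℝ)) : (Fin d → ℝ) → List (ℝ × (Fin d → ℝ)) → Prop
  | x, [] => x ∈ Z
  | x, (a, m) :: rest =>
      (∀ t ∈ Set.Icc (0 : ℝ) a, x + t • m ∈ Z) ∧ StaysIn Z (x + a • m) rest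

section Schedule

variable {d : ℕ} {Z : Set (Fin d → ℝ)}

def endpoint : (Fin d → ℝ) → List (ℝ × (Fin d → ℝ)) → (Fin d → ℝ)
  | x, [] => x
  | x, (a, m) :: rest => endpoint (x + a • m) rest

def scaleDurations (θ : ℝ) (π : List (ℝ × (Fin d → ℝ))) : List (ℝ × (Fin d → ℝ)) :=
  π.map fun p => (θ * p.1, p.2)

theorem StaysIn.endpoint_mem {x : Fin d → ℝ} {π : List (ℝ × (Fin d → ℝ))}
    (h : StaysIn Z x π) : endpoint x π ∈ Z := by
  induction π generalizing x with
  | nil => exact h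
  | cons p rest ih => exact ih h.2

theorem StaysIn.append {x : Fin d → ℝ} {π₁ π₂ : List (ℝ × (Fin d → ℝ))}
    (h₁ : StaysIn Z x π₁) (h₂ : StaysIn Z (endpoint x π₁) π₂) : StaysIn Z x (π₁ ++ π₂) := by
  induction π₁ generalizing x with
  | nil => exact h₂
  | cons p rest ih => exact ⟨h₁.1, ih h₁.2 h₂⟩

theorem StaysIn.replace_suffix {x : Fin d → ℝ} {π₁ π₂ π₃ : List (ℝ × (Fin d → ℝ))}
    (hsuffix : ∀ y, StaysIn Z y π₂ → StaysIn Z y π₃) (h : StaysIn Z x (π₁ ++ π₂)) :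
    StaysIn Z x (π₁ ++ π₃) := by
  induction π₁ generalizing x with
  | nil => exact hsuffix x h
  | cons p rest ih => exact ⟨h.1, ih h.2⟩

theorem endpoint_scaleDurations (θ : ℝ) (π : List (ℝ × (Fin d → ℝ))) (w w' : Fin d → ℝ) :
    endpoint (θ • w + (1 - θ) • w') (scaleDurations θ π) = θ • endpoint w π + (1 - θ) • w' := by
  induction π generalizing w with
  | nil => rfl
  | cons p rest ih =>
    obtain ⟨a, m⟩ := p
    change endpoint (θ • w + (1 - θ) • w' + (θ * a) • m) (scaleDurations θ rest) =
      θ • endpoint (w + a • m) rest + (1 - θ) • w'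
    rw [← ih]
    congr 1
    module

theorem StaysIn.convexComb_scaleDurations (hZ : Convex ℝ Z) {θ : ℝ} (hθ₀ : 0 < θ) (hθ₁ : θ ≤ 1)
    {w w' : Fin d → ℝ} {π : List (ℝ × (Fin d → ℝ))} (hw : StaysIn Z w π) (hw' : w' ∈ Z) :
    StaysIn Z (θ • w + (1 - θ) • w') (scaleDurations θ π) := by
  have hcomb : ∀ {v}, v ∈ Z → θ • v + (1 - θ) • w' ∈ Z := fun hv =>
    hZ hv hw' hθ₀.le (by linarith) (by ring)
  induction π generalizing w with
  | nil => exact hcomb hw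
  | cons p rest ih =>
    obtain ⟨a, m⟩ := p
    obtain ⟨hseg, hrest⟩ := hw
    refine ⟨fun t ht => ?_, ?_⟩
    · have hs : t / θ ∈ Set.Icc 0 a :=
        ⟨div_nonneg ht.1 hθ₀.le, (div_le_iff₀ hθ₀).2 (by linarith [ht.2])⟩
      convert hcomb (hseg _ hs) using 1
      rw [smul_add, smul_smul, mul_div_cancel₀ _ hθ₀.ne']
      abel
    · show StaysIn Z (θ • w + (1 - θ) • w' + (θ * a) • m) (scaleDurations θ rest)
      rw [show θ • w + (1 - θ) • w' + (θ * a) • m = θ • (w + a • m) + (1 - θ) • w' by module]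
      exact ih hrest

theorem StaysIn.split_cons_half (hZ : Convex ℝ Z) {y m : Fin d → ℝ} {α : ℝ} (hα : 0 ≤ α)
    {ρ' : List (ℝ × (Fin d → ℝ))} (h : StaysIn Z y ((α, m) :: ρ')) :
    StaysIn Z y ((α / 2, m) :: (scaleDurations (1 / 2) ρ' ++ [(α / 2, m)])) := by
  obtain ⟨hseg, hrest⟩ := h
  have hy : y ∈ Z := by simpa using hseg 0 ⟨le_rfl, hα⟩
  have hmode : StaysIn Z y [(α, m)] := ⟨hseg, hseg α ⟨hα, le_rfl⟩⟩
  have hmid : y + (α / 2) • m = (1 / 2 : ℝ) • (y + α • m) + (1 - 1 / 2 : ℝ) • y := by module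
  refine ⟨fun t ht => hseg t ⟨ht.1, by linarith [ht.2]⟩, ?_⟩
  rw [hmid]
  refine (hrest.convexComb_scaleDurations hZ (by norm_num) (by norm_num) hy).append ?_
  rw [endpoint_scaleDurations]
  have hlast := hmode.convexComb_scaleDurations hZ (θ := 1 / 2) (by norm_num) (by norm_num)
    hrest.endpoint_mem
  convert hlast using 1
  · module
  · simp only [scaleDurations, List.map_cons, List.map_nil]
    congr 2
    ring

end Schedule

theorem stmt_15_general {d : ℕ} (Z : Set (Fin d → ℝ)) (hZ : Convex ℝ Z)
    (x : Fin d → ℝ) (ρ ρ' : List (ℝ × (Fin d → ℝ))) (α : ℝ) (hα : 0 < α)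
    (m : Fin d → ℝ)
    (hsafe : StaysIn Z x (ρ ++ [(α, m)] ++ ρ')) :
    StaysIn Z x
      (ρ ++ [(α / 2, m)] ++ ρ'.map (fun p => (p.1 / 2, p.2)) ++ [(α / 2, m)]) := by
  have hhalf : ρ'.map (fun p => (p.1 / 2, p.2)) = scaleDurations (1 / 2) ρ' := by
    simp only [scaleDurations, one_div, inv_mul_eq_div]
  rw [hhalf, List.append_assoc, List.append_assoc, List.singleton_append]
  rw [List.append_assoc, List.singleton_append] at hsafe
  exact hsafe.replace_suffix fun y hy => hy.split_cons_half hZ hα.le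

theorem stmt_15 {d : ℕ} (Z : Set (Fin d → ℝ)) (hZ : Convex ℝ Z)
    (x : Fin d → ℝ) (ρ ρ' : List (ℝ × (Fin d → ℝ))) (α : ℝ) (hα : 0 < α)
    (m : Fin d → ℝ)
    (hdur : ∀ p ∈ ρ ++ [(α, m)] ++ ρ', 0 < p.1)
    (hsafe : StaysIn Z x (ρ ++ [(α, m)] ++ ρ')) :
    StaysIn Z x
      (ρ ++ [(α / 2, m)] ++ ρ'.map (fun p => (p.1 / 2, p.2)) ++ [(α / 2, m)]) :=
  stmt_15_general Z hZ x ρ ρ' α hα m hsafe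
end
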